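/- arXiv:2103.01568 — 2 statements merged into one kernel-verified Lean document; each statement's English description precedes it below -/
import Mathlib

section
/- Let F be a finite field and let C, D be n×n matrices over F with C nonsingular and with |F| sufficiently large (e.g., |F| > n). Then there exists a vector ζ ∈ F^n such that the matrix diag(ζ)·C + D is nonsingular. -/
/-!
Take `ζ` constant, equal to `t`. Then `diag(ζ) C + D = C (t I + C⁻¹ D)`, and `det (t I + C⁻¹ D)` is
the characteristic polynomial of `-C⁻¹ D` evaluated at `t`: a monic polynomial of degree `n`, which
cannot vanish at all of the more than `n` points of `F`.
-/

open Cardinal Matrix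

theorem Matrix.exists_det_scalar_sub_ne_zero {R n : Type*} [CommRing R] [IsDomain R] [Fintype n]
    [DecidableEq n] (M : Matrix n n R) (hR : Fintype.card n < #R) :
    ∃ t : R, (scalar n t - M).det ≠ 0 := by
  obtain ⟨t, ht⟩ := M.charpoly.exists_eval_ne_zero_of_natDegree_lt_card M.charpoly_monic.ne_zero
    (by rwa [charpoly_natDegree_eq_dim])
  exact ⟨t, by rwa [eval_charpoly] at ht⟩

theorem Matrix.scalar_mul_add_eq_mul_scalar_add {R n : Type*} [CommRing R] [Fintype n]
    [DecidableEq n] (t : R) {C : Matrix n n R} (hC : IsUnit C.det) (D : Matrix n n R) :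
    scalar n t * C + D = C * (scalar n t + C⁻¹ * D) := by
  rw [mul_add, ← Matrix.mul_assoc, mul_nonsing_inv C hC, Matrix.one_mul,
    (scalar_commute t (Commute.all t) C).eq]

/-- For a finite field `F` with `|F| > n`, an invertible `n × n` matrix `C`
and an arbitrary `n × n` matrix `D`, there is a vector `ζ` such that
`diag(ζ) * C + D` is invertible. -/
theorem stmt_0 {F : Type*} [Field F] [Fintype F] {n : ℕ}
    (hF : n < Fintype.card F)
    (C D : Matrix (Fin n) (Fin n) F) (hC : IsUnit C.det) :
    ∃ ζ : Fin n → F, IsUnit (Matrix.diagonal ζ * C + D).det := by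
  obtain ⟨t, ht⟩ := exists_det_scalar_sub_ne_zero (-(C⁻¹ * D)) (by simpa using hF)
  rw [sub_neg_eq_add] at ht
  refine ⟨fun _ => t, ?_⟩
  rw [← scalar_apply, scalar_mul_add_eq_mul_scalar_add t hC, det_mul]
  exact hC.mul ht.isUnit
end

section
/- Let W be a random variable uniform on F^r and let Y = (Y_1,...,Y_N) be random variables over a finite field F. Suppose (correctness) W is a deterministic function of Y_A for some A ⊆ [N], and (privacy) W is independent of Y_B for some B ⊆ [N]. Then r·log|F| ≤ H(Y_{A∖B}) ≤ |A∖B|·log|F|; in particular r ≤ |A∖B|. -/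
open Finset

/-- Probability that a finite random variable `X` takes value `a`, under weights `p`. -/
noncomputable def prob {Ω α : Type*} [Fintype Ω] [DecidableEq α]
    (p : Ω → ℝ) (X : Ω → α) (a : α) : ℝ :=
  ∑ ω ∈ univ.filter (fun ω => X ω = a), p ω

/-- Shannon entropy of a random variable `X` on a finite probability space. -/
noncomputable def ent {Ω α : Type*} [Fintype Ω] [Fintype α] [DecidableEq α]
    (p : Ω → ℝ) (X : Ω → α) : ℝ :=
  ∑ a : α, Real.negMulLog (prob p X a)

section aux
variable {Ω : Type*} [Fintype Ω] {p : Ω → ℝ}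

lemma prob_nonneg (hp0 : ∀ ω, 0 ≤ p ω) {α : Type*} [DecidableEq α] (X : Ω → α) (a : α) :
    0 ≤ prob p X a :=
  Finset.sum_nonneg fun ω _ => hp0 ω

lemma sum_prob {α : Type*} [Fintype α] [DecidableEq α] (X : Ω → α) :
    ∑ a, prob p X a = ∑ ω, p ω := by
  unfold prob
  exact Finset.sum_fiberwise univ X p

lemma prob_comp {α β : Type*} [Fintype α] [DecidableEq α] [DecidableEq β]
    (X : Ω → α) (g : α → β) (b : β) :
    prob p (fun ω => g (X ω)) b = ∑ a ∈ univ.filter (fun a => g a = b), prob p X a := by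
  unfold prob
  have h2 : ∀ a : α, (∑ ω ∈ univ.filter (fun ω => X ω = a), if g (X ω) = b then p ω else 0)
      = if g a = b then ∑ ω ∈ univ.filter (fun ω => X ω = a), p ω else 0 := by
    intro a
    split_ifs with h
    · exact Finset.sum_congr rfl fun ω hω => by
        simp only [mem_filter] at hω; rw [hω.2, if_pos h]
    · exact Finset.sum_eq_zero fun ω hω => by
        simp only [mem_filter] at hω; rw [hω.2, if_neg h]
  rw [Finset.sum_filter (fun ω => g (X ω) = b) p,
    ← Finset.sum_fiberwise univ X (fun ω => if g (X ω) = b then p ω else 0)]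
  conv_rhs => rw [Finset.sum_filter]
  exact Finset.sum_congr rfl fun a _ => h2 a

lemma negMulLog_sum_le {ι : Type*} (s : Finset ι) (x : ι → ℝ) (hx : ∀ i ∈ s, 0 ≤ x i) :
    Real.negMulLog (∑ i ∈ s, x i) ≤ ∑ i ∈ s, Real.negMulLog (x i) := by
  have hS : ∀ i ∈ s, x i ≤ ∑ j ∈ s, x j := fun i hi => Finset.single_le_sum hx hi
  rw [Real.negMulLog, neg_mul, ← neg_neg (∑ i ∈ s, Real.negMulLog (x i)), neg_le_neg_iff,
    Finset.sum_mul (f := x), ← Finset.sum_neg_distrib]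
  refine Finset.sum_le_sum fun i hi => ?_
  simp only [Real.negMulLog, neg_mul, neg_neg]
  rcases eq_or_lt_of_le (hx i hi) with h0 | h0
  · simp [← h0]
  · exact mul_le_mul_of_nonneg_left (Real.log_le_log h0 (hS i hi)) (hx i hi)

/-- Gibbs' inequality. -/
lemma gibbs {ι : Type*} [Fintype ι] (pp qq : ι → ℝ) (hp : ∀ i, 0 ≤ pp i)
    (hq : ∀ i, 0 ≤ qq i) (hsp : ∑ i, pp i = 1) (hsq : ∑ i, qq i ≤ 1)
    (hpq : ∀ i, pp i ≠ 0 → qq i ≠ 0) :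
    ∑ i, Real.negMulLog (pp i) ≤ ∑ i, -(pp i * Real.log (qq i)) := by
  have key : ∀ i, pp i * Real.log (qq i) - pp i * Real.log (pp i) ≤ qq i - pp i := by
    intro i
    rcases eq_or_lt_of_le (hp i) with h0 | h0
    · simp only [← h0, zero_mul, sub_zero, zero_sub, sub_self]
      linarith [hq i]
    · have hq0 : 0 < qq i := (hq i).lt_of_ne' (hpq i h0.ne')
      have := Real.log_le_sub_one_of_pos (x := qq i / pp i) (by positivity)
      rw [Real.log_div hq0.ne' h0.ne'] at this
      have := mul_le_mul_of_nonneg_left this (hp i)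
      rw [mul_sub, mul_sub, mul_div_cancel₀ _ h0.ne', mul_one] at this
      linarith
  have h2 : ∑ i, (pp i * Real.log (qq i) - pp i * Real.log (pp i)) ≤ 0 := by
    calc ∑ i, (pp i * Real.log (qq i) - pp i * Real.log (pp i))
        ≤ ∑ i, (qq i - pp i) := Finset.sum_le_sum fun i _ => key i
      _ = (∑ i, qq i) - 1 := by rw [Finset.sum_sub_distrib, hsp]
      _ ≤ 0 := by linarith
  simp only [Real.negMulLog, neg_mul]
  rw [Finset.sum_neg_distrib, Finset.sum_neg_distrib] at *
  rw [Finset.sum_sub_distrib] at h2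
  linarith

lemma ent_le_log_card {α : Type*} [Fintype α] [DecidableEq α]
    (hp0 : ∀ ω, 0 ≤ p ω) (hp1 : ∑ ω, p ω = 1) (X : Ω → α) (hα : 0 < Fintype.card α) :
    ent p X ≤ Real.log (Fintype.card α) := by
  have h := gibbs (fun a => prob p X a) (fun _ => (Fintype.card α : ℝ)⁻¹)
    (fun a => prob_nonneg hp0 X a) (fun _ => by positivity)
    (by rw [sum_prob, hp1]) (by
      rw [Finset.sum_const, card_univ, nsmul_eq_mul, mul_inv_cancel₀ (by positivity)])
    (fun i _ => by positivity)
  refine h.trans_eq ?_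
  simp only [Real.log_inv, mul_neg, neg_neg, ← Finset.sum_mul]
  rw [sum_prob, hp1, one_mul]

lemma ent_comp_le {α β : Type*} [Fintype α] [DecidableEq α] [Fintype β] [DecidableEq β]
    (hp0 : ∀ ω, 0 ≤ p ω) (X : Ω → α) (g : α → β) :
    ent p (fun ω => g (X ω)) ≤ ent p X := by
  unfold ent
  calc ∑ b : β, Real.negMulLog (prob p (fun ω => g (X ω)) b)
      ≤ ∑ b : β, ∑ a ∈ univ.filter (fun a => g a = b), Real.negMulLog (prob p X a) := by
        refine Finset.sum_le_sum fun b _ => ?_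
        rw [prob_comp X g b]
        exact negMulLog_sum_le _ _ fun a _ => prob_nonneg hp0 X a
    _ = ∑ a : α, Real.negMulLog (prob p X a) :=
        Finset.sum_fiberwise univ g (fun a => Real.negMulLog (prob p X a))

lemma prob_fst {α β : Type*} [Fintype α] [DecidableEq α] [Fintype β] [DecidableEq β]
    (X : Ω → α) (T : Ω → β) (a : α) :
    prob p X a = ∑ b : β, prob p (fun ω => (X ω, T ω)) (a, b) := by
  unfold prob
  rw [← Finset.sum_fiberwise (univ.filter (fun ω => X ω = a)) T p]
  refine Finset.sum_congr rfl fun b _ => ?_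
  rw [Finset.filter_filter]
  exact Finset.sum_congr (by ext ω; simp [Prod.ext_iff]) fun _ _ => rfl

lemma prob_snd {α β : Type*} [Fintype α] [DecidableEq α] [Fintype β] [DecidableEq β]
    (X : Ω → α) (T : Ω → β) (b : β) :
    prob p T b = ∑ a : α, prob p (fun ω => (X ω, T ω)) (a, b) := by
  unfold prob
  rw [← Finset.sum_fiberwise (univ.filter (fun ω => T ω = b)) X p]
  refine Finset.sum_congr rfl fun a _ => ?_
  rw [Finset.filter_filter]
  exact Finset.sum_congr (by ext ω; simp [Prod.ext_iff, and_comm]) fun _ _ => rfl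

lemma prob_pair_le_fst {α β : Type*} [DecidableEq α] [DecidableEq β]
    (hp0 : ∀ ω, 0 ≤ p ω) (X : Ω → α) (T : Ω → β) (a : α) (b : β) :
    prob p (fun ω => (X ω, T ω)) (a, b) ≤ prob p X a := by
  refine Finset.sum_le_sum_of_subset_of_nonneg ?_ (fun ω _ _ => hp0 ω)
  intro ω hω
  simp only [mem_filter, Prod.mk.injEq] at *
  exact ⟨hω.1, hω.2.1⟩

lemma prob_pair_le_snd {α β : Type*} [DecidableEq α] [DecidableEq β]
    (hp0 : ∀ ω, 0 ≤ p ω) (X : Ω → α) (T : Ω → β) (a : α) (b : β) :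
    prob p (fun ω => (X ω, T ω)) (a, b) ≤ prob p T b := by
  refine Finset.sum_le_sum_of_subset_of_nonneg ?_ (fun ω _ _ => hp0 ω)
  intro ω hω
  simp only [mem_filter, Prod.mk.injEq] at *
  exact ⟨hω.1, hω.2.2⟩

lemma ent_pair_le {α β : Type*} [Fintype α] [DecidableEq α] [Fintype β] [DecidableEq β]
    (hp0 : ∀ ω, 0 ≤ p ω) (hp1 : ∑ ω, p ω = 1) (X : Ω → α) (T : Ω → β) :
    ent p (fun ω => (X ω, T ω)) ≤ ent p X + ent p T := by
  have hZn : ∀ z : α × β, 0 ≤ prob p (fun ω => (X ω, T ω)) z :=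
    fun z => prob_nonneg hp0 _ z
  have h := gibbs (fun z : α × β => prob p (fun ω => (X ω, T ω)) z)
      (fun z : α × β => prob p X z.1 * prob p T z.2)
      hZn (fun z => mul_nonneg (prob_nonneg hp0 X _) (prob_nonneg hp0 T _))
      (by rw [sum_prob, hp1])
      (by
        rw [Fintype.sum_prod_type]
        simp only [← Finset.mul_sum]
        rw [← Finset.sum_mul, sum_prob, sum_prob, hp1, one_mul])
      (fun z hz => by
        refine mul_ne_zero ?_ ?_
        · exact fun h0 => hz (le_antisymm (h0 ▸ prob_pair_le_fst hp0 X T z.1 z.2) (hZn z))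
        · exact fun h0 => hz (le_antisymm (h0 ▸ prob_pair_le_snd hp0 X T z.1 z.2) (hZn z)))
  refine h.trans_eq ?_
  have hsplit : ∀ z : α × β,
      -(prob p (fun ω => (X ω, T ω)) z * Real.log (prob p X z.1 * prob p T z.2))
      = -(prob p (fun ω => (X ω, T ω)) z * Real.log (prob p X z.1))
        + -(prob p (fun ω => (X ω, T ω)) z * Real.log (prob p T z.2)) := by
    intro z
    rcases eq_or_ne (prob p (fun ω => (X ω, T ω)) z) 0 with h0 | h0
    · simp [h0]
    · have h1 : prob p X z.1 ≠ 0 :=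
        fun hc => h0 (le_antisymm (hc ▸ prob_pair_le_fst hp0 X T z.1 z.2) (hZn z))
      have h2 : prob p T z.2 ≠ 0 :=
        fun hc => h0 (le_antisymm (hc ▸ prob_pair_le_snd hp0 X T z.1 z.2) (hZn z))
      rw [Real.log_mul h1 h2]; ring
  rw [Finset.sum_congr rfl fun z _ => hsplit z, Finset.sum_add_distrib]
  congr 1
  · rw [Fintype.sum_prod_type]
    unfold ent
    refine Finset.sum_congr rfl fun a _ => ?_
    rw [Finset.sum_neg_distrib]
    show -∑ x : β, prob p (fun ω => (X ω, T ω)) (a, x) * Real.log (prob p X a) = _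
    rw [← Finset.sum_mul, ← prob_fst X T a, Real.negMulLog, neg_mul]
  · rw [Fintype.sum_prod_type_right]
    unfold ent
    refine Finset.sum_congr rfl fun b _ => ?_
    rw [Finset.sum_neg_distrib]
    show -∑ x : α, prob p (fun ω => (X ω, T ω)) (x, b) * Real.log (prob p T b) = _
    rw [← Finset.sum_mul, ← prob_snd X T b, Real.negMulLog, neg_mul]

lemma ent_pair_of_indep {α β : Type*} [Fintype α] [DecidableEq α] [Fintype β] [DecidableEq β]
    (hp1 : ∑ ω, p ω = 1) (X : Ω → α) (T : Ω → β)
    (hind : ∀ a b, prob p (fun ω => (X ω, T ω)) (a, b) = prob p X a * prob p T b) :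
    ent p (fun ω => (X ω, T ω)) = ent p X + ent p T := by
  unfold ent
  rw [Fintype.sum_prod_type]
  calc ∑ a, ∑ b, Real.negMulLog (prob p (fun ω => (X ω, T ω)) (a, b))
      = ∑ a, ∑ b, (prob p T b * Real.negMulLog (prob p X a)
          + prob p X a * Real.negMulLog (prob p T b)) := by
        refine Finset.sum_congr rfl fun a _ => Finset.sum_congr rfl fun b _ => ?_
        rw [hind a b, Real.negMulLog_mul]
    _ = ∑ a, ((∑ b, prob p T b) * Real.negMulLog (prob p X a)
          + prob p X a * ∑ b, Real.negMulLog (prob p T b)) := by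
        refine Finset.sum_congr rfl fun a _ => ?_
        rw [Finset.sum_add_distrib, ← Finset.sum_mul, ← Finset.mul_sum]
    _ = _ := by
        rw [Finset.sum_add_distrib, ← Finset.sum_mul, ← Finset.mul_sum, sum_prob T, hp1,
          one_mul, sum_prob X, hp1, one_mul]

end aux

/-- If `W` is uniform on `F^r`, a deterministic function of `Y_A`
(correctness), and independent of `Y_B` (privacy), then
`r log|F| ≤ H(Y_{A∖B}) ≤ |A∖B| log|F|`, and in particular `r ≤ |A∖B|`. -/
theorem stmt_9 {Ω : Type*} [Fintype Ω] {F : Type*} [Fintype F] [DecidableEq F]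
    (hF : 1 < Fintype.card F) {N r : ℕ}
    (p : Ω → ℝ) (hp0 : ∀ ω, 0 ≤ p ω) (hp1 : ∑ ω, p ω = 1)
    (W : Ω → (Fin r → F)) (Y : Fin N → Ω → F) (A B : Finset (Fin N))
    (hunif : ∀ a, prob p W a = 1 / (Fintype.card F : ℝ) ^ r)
    (hcorrect : ∃ f : ({i // i ∈ A} → F) → (Fin r → F),
      ∀ ω, W ω = f (fun i => Y i.val ω))
    (hprivacy : ∀ (a : Fin r → F) (b : {i // i ∈ B} → F),
      prob p (fun ω => (W ω, fun i : {i // i ∈ B} => Y i.val ω)) (a, b) =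
        prob p W a * prob p (fun ω (i : {i // i ∈ B}) => Y i.val ω) b) :
    (r : ℝ) * Real.log (Fintype.card F) ≤
        ent p (fun ω (i : {i // i ∈ A \ B}) => Y i.val ω) ∧
    ent p (fun ω (i : {i // i ∈ A \ B}) => Y i.val ω) ≤
        ((A \ B).card : ℝ) * Real.log (Fintype.card F) ∧
    r ≤ (A \ B).card := by
  obtain ⟨f, hf⟩ := hcorrect
  have hcF : (1 : ℝ) < (Fintype.card F : ℝ) := by exact_mod_cast hF
  have hc0 : (0 : ℝ) < (Fintype.card F : ℝ) := lt_trans one_pos hcF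
  have hln : 0 < Real.log (Fintype.card F) := Real.log_pos hcF
  set X : Ω → ({i // i ∈ A \ B} → F) := fun ω (i : {i // i ∈ A \ B}) => Y i.val ω with hX
  set T : Ω → ({i // i ∈ B} → F) := fun ω (i : {i // i ∈ B}) => Y i.val ω with hT
  -- entropy of W
  have hcardW : Fintype.card (Fin r → F) = Fintype.card F ^ r := by
    simp [Fintype.card_fun]
  have hW : ent p W = (r : ℝ) * Real.log (Fintype.card F) := by
    unfold ent
    rw [Finset.sum_congr rfl fun a _ => by rw [hunif a]]
    rw [Finset.sum_const, card_univ, hcardW, nsmul_eq_mul, Nat.cast_pow]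
    rw [Real.negMulLog, one_div, Real.log_inv, Real.log_pow]
    field_simp
  -- (W, T) is a function of (X, T)
  set g : ({i // i ∈ A \ B} → F) × ({i // i ∈ B} → F) → (Fin r → F) × ({i // i ∈ B} → F) :=
    fun z => (f (fun i => if h : i.val ∈ B then z.2 ⟨i.val, h⟩
      else z.1 ⟨i.val, Finset.mem_sdiff.2 ⟨i.2, h⟩⟩), z.2) with hg
  have hWT : (fun ω => (W ω, T ω)) = fun ω => g (X ω, T ω) := by
    funext ω
    rw [hf ω]
    simp only [hg, hX, hT]
    have hfun : (fun i : {i // i ∈ A} => (if h : i.val ∈ B then Y i.val ω else Y i.val ω))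
        = (fun i : {i // i ∈ A} => Y i.val ω) := by
      funext i; split_ifs <;> rfl
    rw [hfun]
  have e1 : ent p W + ent p T = ent p (fun ω => (W ω, T ω)) :=
    (ent_pair_of_indep hp1 W T hprivacy).symm
  have e2 : ent p (fun ω => (W ω, T ω)) ≤ ent p (fun ω => (X ω, T ω)) := by
    rw [hWT]
    exact ent_comp_le hp0 (fun ω => (X ω, T ω)) g
  have e3 : ent p (fun ω => (X ω, T ω)) ≤ ent p X + ent p T := ent_pair_le hp0 hp1 X T
  have hlow : (r : ℝ) * Real.log (Fintype.card F) ≤ ent p X := by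
    rw [← hW]; linarith
  have hcardX : Fintype.card ({i // i ∈ A \ B} → F) = Fintype.card F ^ (A \ B).card := by
    rw [Fintype.card_fun, Fintype.card_coe]
  have hup : ent p X ≤ ((A \ B).card : ℝ) * Real.log (Fintype.card F) := by
    have := ent_le_log_card hp0 hp1 X (by rw [hcardX]; positivity)
    rwa [hcardX, Nat.cast_pow, Real.log_pow] at this
  refine ⟨hlow, hup, ?_⟩
  have : (r : ℝ) ≤ ((A \ B).card : ℝ) :=
    le_of_mul_le_mul_right (hlow.trans hup) hln
  exact_mod_cast this
end
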